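/- Lipschitz dependence of the behavioral Q-value on the reward and behavior functions: let Q^π(r, ψ) denote the unique fixed point of the behavioral Bellman operator built from reward r and behavior function ψ (with fixed p, π, α, γ). Then for any r₁, r₂, ψ₁, ψ₂ : S → A → ℝ, ‖Q^π(r₁, ψ₁) − Q^π(r₂, ψ₂)‖∞ ≤ (‖r₁ − r₂‖∞ + α · ‖ψ₁ − ψ₂‖∞) / (1 − γ). -/

import Mathlib

/-!
The difference of the two fixed points satisfies
`Q₁ - Q₂ = (r₁ - r₂) + P (α • (ψ₁ - ψ₂) + γ • (Q₁ - Q₂))`, where `P` averages over the next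
state under `p` and the next action under `π`. Being a stochastic averaging, `P` does not increase
the sup norm, so `‖Q₁ - Q₂‖ ≤ ‖r₁ - r₂‖ + α ‖ψ₁ - ψ₂‖ + γ ‖Q₁ - Q₂‖`, and `γ < 1` lets us solve
for `‖Q₁ - Q₂‖`.
-/

open Finset

theorem norm_sum_smul_le_of_stochastic {ι E : Type*} [Fintype ι] [SeminormedAddCommGroup E]
    [NormedSpace ℝ E] {w : ι → ℝ} (hw0 : ∀ i, 0 ≤ w i) (hw1 : ∑ i, w i = 1) (f : ι → E) :
    ‖∑ i, w i • f i‖ ≤ ‖f‖ :=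
  mem_closedBall_zero_iff.1 <| (convex_closedBall 0 ‖f‖).sum_mem (fun i _ => hw0 i) hw1
    fun i _ => mem_closedBall_zero_iff.2 (norm_le_pi_norm f i)

namespace MDP

variable {S A : Type*} [Fintype S] [Fintype A]

def nextStepAverage (p : S → A → S → ℝ) (π : S → A → ℝ) :
    (S → A → ℝ) →ₗ[ℝ] (S → A → ℝ) where
  toFun f s a := ∑ s', p s a s' * ∑ a', π s' a' * f s' a'
  map_add' f g := by
    funext s a
    simp only [Pi.add_apply, mul_add, sum_add_distrib]
  map_smul' c f := by
    funext s a
    simp only [Pi.smul_apply, smul_eq_mul, RingHom.id_apply, mul_sum]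
    exact sum_congr rfl fun _ _ => sum_congr rfl fun _ _ => by ring

theorem norm_nextStepAverage_le {p : S → A → S → ℝ} (hp0 : ∀ s a s', 0 ≤ p s a s')
    (hp1 : ∀ s a, ∑ s', p s a s' = 1) {π : S → A → ℝ} (hπ0 : ∀ s a, 0 ≤ π s a)
    (hπ1 : ∀ s, ∑ a, π s a = 1) (f : S → A → ℝ) :
    ‖nextStepAverage p π f‖ ≤ ‖f‖ := by
  have hπf : ‖fun s' => ∑ a', π s' a' * f s' a'‖ ≤ ‖f‖ :=
    (pi_norm_le_iff_of_nonneg (norm_nonneg f)).2 fun s' =>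
      (norm_sum_smul_le_of_stochastic (hπ0 s') (hπ1 s') (f s')).trans (norm_le_pi_norm f s')
  refine (pi_norm_le_iff_of_nonneg (norm_nonneg f)).2 fun s =>
    (pi_norm_le_iff_of_nonneg (norm_nonneg f)).2 fun a => ?_
  exact (norm_sum_smul_le_of_stochastic (hp0 s a) (hp1 s a) _).trans hπf

/-- The behavioral Bellman operator `T^π` with reward `r` and behavior function `ψ`. -/
def behavioralBellman (p : S → A → S → ℝ) (π : S → A → ℝ) (α γ : ℝ) (r ψ Q : S → A → ℝ) :
    S → A → ℝ :=
  r + nextStepAverage p π (α • ψ + γ • Q)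

theorem behavioralBellman_sub (p : S → A → S → ℝ) (π : S → A → ℝ) (α γ : ℝ)
    (r₁ r₂ ψ₁ ψ₂ Q₁ Q₂ : S → A → ℝ) :
    behavioralBellman p π α γ r₁ ψ₁ Q₁ - behavioralBellman p π α γ r₂ ψ₂ Q₂ =
      behavioralBellman p π α γ (r₁ - r₂) (ψ₁ - ψ₂) (Q₁ - Q₂) := by
  simp only [behavioralBellman, smul_sub, map_add, map_sub]
  abel

theorem norm_behavioralBellman_sub_le {p : S → A → S → ℝ} (hp0 : ∀ s a s', 0 ≤ p s a s')
    (hp1 : ∀ s a, ∑ s', p s a s' = 1) {π : S → A → ℝ} (hπ0 : ∀ s a, 0 ≤ π s a)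
    (hπ1 : ∀ s, ∑ a, π s a = 1) (α γ : ℝ) (r₁ r₂ ψ₁ ψ₂ Q₁ Q₂ : S → A → ℝ) :
    ‖behavioralBellman p π α γ r₁ ψ₁ Q₁ - behavioralBellman p π α γ r₂ ψ₂ Q₂‖ ≤
      ‖r₁ - r₂‖ + |α| * ‖ψ₁ - ψ₂‖ + |γ| * ‖Q₁ - Q₂‖ := by
  rw [behavioralBellman_sub, behavioralBellman, add_assoc]
  refine (norm_add_le _ _).trans (add_le_add_right ?_ _)
  calc ‖nextStepAverage p π (α • (ψ₁ - ψ₂) + γ • (Q₁ - Q₂))‖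
      ≤ ‖α • (ψ₁ - ψ₂) + γ • (Q₁ - Q₂)‖ := norm_nextStepAverage_le hp0 hp1 hπ0 hπ1 _
    _ ≤ ‖α • (ψ₁ - ψ₂)‖ + ‖γ • (Q₁ - Q₂)‖ := norm_add_le _ _
    _ = |α| * ‖ψ₁ - ψ₂‖ + |γ| * ‖Q₁ - Q₂‖ := by
      rw [norm_smul, norm_smul, Real.norm_eq_abs, Real.norm_eq_abs]

end MDP

open MDP

theorem behavioral_q_value_lipschitz_general
    {S A : Type*} [Fintype S] [Fintype A]
    (p : S → A → S → ℝ) (hp0 : ∀ s a s', 0 ≤ p s a s') (hp1 : ∀ s a, ∑ s', p s a s' = 1)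
    (π : S → A → ℝ) (hπ0 : ∀ s a, 0 ≤ π s a) (hπ1 : ∀ s, ∑ a, π s a = 1)
    (α : ℝ) (hα : 0 ≤ α) (γ : ℝ) (hγ0 : 0 ≤ γ) (hγ1 : γ < 1)
    (r₁ r₂ ψ₁ ψ₂ : S → A → ℝ)
    (Q₁ Q₂ : S → A → ℝ)
    -- `Q₁` and `Q₂` are the (unique) fixed points of the behavioral Bellman operators
    -- built from `(r₁, ψ₁)` and `(r₂, ψ₂)`, respectively
    (hQ₁ : ∀ s a, Q₁ s a =
      r₁ s a + ∑ s', p s a s' * ∑ a', π s' a' * (α * ψ₁ s' a' + γ * Q₁ s' a'))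
    (hQ₂ : ∀ s a, Q₂ s a =
      r₂ s a + ∑ s', p s a s' * ∑ a', π s' a' * (α * ψ₂ s' a' + γ * Q₂ s' a')) :
    ‖Q₁ - Q₂‖ ≤ (‖r₁ - r₂‖ + α * ‖ψ₁ - ψ₂‖) / (1 - γ) := by
  have hfix₁ : behavioralBellman p π α γ r₁ ψ₁ Q₁ = Q₁ := funext₂ fun s a => (hQ₁ s a).symm
  have hfix₂ : behavioralBellman p π α γ r₂ ψ₂ Q₂ = Q₂ := funext₂ fun s a => (hQ₂ s a).symm
  have hbound := norm_behavioralBellman_sub_le hp0 hp1 hπ0 hπ1 α γ r₁ r₂ ψ₁ ψ₂ Q₁ Q₂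
  rw [hfix₁, hfix₂, abs_of_nonneg hα, abs_of_nonneg hγ0] at hbound
  rw [le_div_iff₀ (sub_pos.2 hγ1)]
  linear_combination hbound

/-- Lipschitz dependence of the behavioral Q-value on the reward and behavior functions. -/
theorem behavioral_q_value_lipschitz
    {S A : Type*} [Fintype S] [Nonempty S] [Fintype A] [Nonempty A]
    (p : S → A → S → ℝ) (hp0 : ∀ s a s', 0 ≤ p s a s') (hp1 : ∀ s a, ∑ s', p s a s' = 1)
    (π : S → A → ℝ) (hπ0 : ∀ s a, 0 ≤ π s a) (hπ1 : ∀ s, ∑ a, π s a = 1)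
    (α : ℝ) (hα : 0 ≤ α) (γ : ℝ) (hγ0 : 0 ≤ γ) (hγ1 : γ < 1)
    (r₁ r₂ ψ₁ ψ₂ : S → A → ℝ)
    (Q₁ Q₂ : S → A → ℝ)
    -- `Q₁` and `Q₂` are the (unique) fixed points of the behavioral Bellman operators
    -- built from `(r₁, ψ₁)` and `(r₂, ψ₂)`, respectively
    (hQ₁ : ∀ s a, Q₁ s a =
      r₁ s a + ∑ s', p s a s' * ∑ a', π s' a' * (α * ψ₁ s' a' + γ * Q₁ s' a'))
    (hQ₂ : ∀ s a, Q₂ s a =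
      r₂ s a + ∑ s', p s a s' * ∑ a', π s' a' * (α * ψ₂ s' a' + γ * Q₂ s' a')) :
    ‖Q₁ - Q₂‖ ≤ (‖r₁ - r₂‖ + α * ‖ψ₁ - ψ₂‖) / (1 - γ) :=
  behavioral_q_value_lipschitz_general p hp0 hp1 π hπ0 hπ1 α hα γ hγ0 hγ1 r₁ r₂ ψ₁ ψ₂ Q₁ Q₂ hQ₁ hQ₂
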